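/- Let G be a finite abelian group and let H₂ = {x ∈ G : x² = 1} be its maximal elementary abelian 2-subgroup. Then the induction map 𝔹_{H₂} → 𝔹_G induced by the inclusion H₂ ↪ G is injective, and its image equals the torsion subgroup of 𝔹_G (which is an elementary abelian 2-group). -/

import Mathlib

/-! For abelian `G` the generators of `N` are `ĝ + ĝ⁻¹` with `g ≠ g⁻¹` and `2ĥ` with `h` an
involution, so modulo `N` the free abelian group splits into a free part, one copy of `ℤ` per
pair `{g, g⁻¹}`, and an `𝔽₂`-vector space on the involutions. Fixing any linear order on `G`, the
projection `freePart` onto the free summand kills `N`, and every `x` is congruent modulo `N` to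
`freePart x` plus its restriction to `H₂`. A torsion class therefore has `freePart x = 0` and
comes from `H₂`. Restriction to a subgroup is a retraction preserving `N`, which gives
injectivity, and `2ĥ ∈ N` for involutions `h`. Membership in `ker φ` descends to `H₂` because
`H₂ → G` stays injective on abelianizations when `G` is abelian. -/

namespace SingOrbit

variable (G : Type*) [Group G]

/-- The map from conjugacy classes to the abelianization. -/
def classAb : ConjClasses G → Additive (Abelianization G) :=
  Quotient.lift (fun g : G => Additive.ofMul (Abelianization.of g)) <| by
    intro a b hab
    obtain ⟨c, hc⟩ := isConj_iff.mp (hab : IsConj a b)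
    subst hc
    show Additive.ofMul (Abelianization.of a) = Additive.ofMul (Abelianization.of (c * a * c⁻¹))
    congr 1
    rw [map_mul, map_mul, map_inv, mul_comm (Abelianization.of c) (Abelianization.of a),
      mul_inv_cancel_right]

/-- Nontrivial conjugacy classes. -/
def NCC := {c : ConjClasses G // c ≠ 1}

/-- The homomorphism `φ` from the free abelian group on the nontrivial conjugacy classes
to the abelianization, sending a conjugacy class to the image of any representative. -/
noncomputable def phi : FreeAbelianGroup (NCC G) →+ Additive (Abelianization G) :=
  FreeAbelianGroup.lift fun c => classAb G c.1

/-- The basis element of the free abelian group corresponding to a conjugacy class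
(`0` for the trivial class). -/
noncomputable def clsC (c : ConjClasses G) : FreeAbelianGroup (NCC G) :=
  letI := Classical.dec (c = 1)
  if h : c = 1 then 0 else FreeAbelianGroup.of ⟨c, h⟩

/-- The basis element corresponding to the conjugacy class of a group element. -/
noncomputable def clsF (x : G) : FreeAbelianGroup (NCC G) := clsC G (ConjClasses.mk x)

/-- The subgroup generated by the elements `x̂ + x̂⁻¹`. -/
noncomputable def NSub : AddSubgroup (FreeAbelianGroup (NCC G)) :=
  AddSubgroup.closure {a | ∃ x : G, a = clsF G x + clsF G x⁻¹}

/-- The group `𝔹_G` of singular orbit data: `(ker φ) / N`. -/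
noncomputable def SOD := (phi G).ker ⧸ ((NSub G).addSubgroupOf (phi G).ker)

noncomputable instance : AddCommGroup (SOD G) :=
  inferInstanceAs (AddCommGroup ((phi G).ker ⧸ ((NSub G).addSubgroupOf (phi G).ker)))

variable {G}

lemma classAb_mk (x : G) :
    classAb G (ConjClasses.mk x) = Additive.ofMul (Abelianization.of x) := rfl

lemma mk_eq_one_iff {x : G} : ConjClasses.mk x = 1 ↔ x = 1 := by
  rw [ConjClasses.one_eq_mk_one, ConjClasses.mk_eq_mk_iff_isConj, isConj_one_left]

lemma phi_of (c : NCC G) : phi G (FreeAbelianGroup.of c) = classAb G c.1 :=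
  FreeAbelianGroup.lift_apply_of _ _

lemma phi_clsF (x : G) : phi G (clsF G x) = Additive.ofMul (Abelianization.of x) := by
  rw [clsF, clsC]
  split_ifs with h
  · have hx : x = 1 := mk_eq_one_iff.mp h
    subst hx
    simp
  · exact (phi_of (G := G) ⟨ConjClasses.mk x, h⟩).trans (classAb_mk x)

/-- The element of the free abelian group associated to a list of group elements. -/
noncomputable def sumF (l : List G) : FreeAbelianGroup (NCC G) := (l.map (clsF G)).sum

lemma sumF_nil : sumF ([] : List G) = 0 := rfl

lemma sumF_cons (a : G) (t : List G) : sumF (a :: t) = clsF G a + sumF t := by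
  simp [sumF]

lemma phi_sumF (l : List G) :
    phi G (sumF l) = Additive.ofMul (Abelianization.of l.prod) := by
  induction l with
  | nil => simp [sumF_nil]
  | cons a t ih =>
    rw [sumF_cons, map_add, phi_clsF, ih, List.prod_cons, map_mul, ofMul_mul]

lemma abOf_eq_one_iff {x : G} : Abelianization.of x = 1 ↔ x ∈ commutator G :=
  QuotientGroup.eq_one_iff x

lemma sumF_mem_ker {l : List G} (h : l.prod ∈ commutator G) : sumF l ∈ (phi G).ker := by
  rw [AddMonoidHom.mem_ker, phi_sumF, abOf_eq_one_iff.mpr h]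
  rfl

/-- The singular orbit datum `[x̂₁, …, x̂_q]` associated to a list of group elements whose
product lies in the commutator subgroup. -/
noncomputable def data (l : List G) (h : l.prod ∈ commutator G) : SOD G :=
  (QuotientAddGroup.mk ⟨sumF l, sumF_mem_ker h⟩ : SOD G)

/-! ### Functoriality -/

variable {H : Type*} [Group H]

noncomputable def pushC (f : G →* H) : ConjClasses G → FreeAbelianGroup (NCC H) :=
  Quotient.lift (fun x : G => clsF H (f x)) <| by
    intro a b hab
    show clsF H (f a) = clsF H (f b)
    have hmk : ConjClasses.mk (f a) = ConjClasses.mk (f b) :=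
      ConjClasses.mk_eq_mk_iff_isConj.mpr (f.map_isConj (hab : IsConj a b))
    rw [clsF, clsF, hmk]

lemma pushC_mk (f : G →* H) (x : G) : pushC f (ConjClasses.mk x) = clsF H (f x) := rfl

/-- The induced map on free abelian groups. -/
noncomputable def FMap (f : G →* H) : FreeAbelianGroup (NCC G) →+ FreeAbelianGroup (NCC H) :=
  FreeAbelianGroup.lift fun c => pushC f c.1

lemma FMap_clsF (f : G →* H) (x : G) : FMap f (clsF G x) = clsF H (f x) := by
  by_cases h : ConjClasses.mk x = 1
  · have hx : x = 1 := mk_eq_one_iff.mp h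
    subst hx
    have h1 : clsF G (1 : G) = 0 := by
      rw [clsF, clsC, dif_pos (mk_eq_one_iff.mpr rfl)]
    have h2 : clsF H ((f 1 : H)) = 0 := by
      rw [map_one, clsF, clsC, dif_pos (mk_eq_one_iff.mpr rfl)]
    rw [h1, map_zero, h2]
  · have hx : clsF G x = FreeAbelianGroup.of ⟨ConjClasses.mk x, h⟩ := by
      rw [clsF, clsC, dif_neg h]
    rw [hx, FMap]
    exact FreeAbelianGroup.lift_apply_of (fun c : NCC G => pushC f c.1) _

lemma FMap_sumF (f : G →* H) (l : List G) : FMap f (sumF l) = sumF (l.map f) := by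
  induction l with
  | nil => simp [sumF_nil]
  | cons a t ih =>
    rw [sumF_cons, map_add, FMap_clsF, ih, List.map_cons, sumF_cons]

lemma phi_FMap (f : G →* H) (a : FreeAbelianGroup (NCC G)) :
    phi H (FMap f a) = MonoidHom.toAdditive (Abelianization.map f) (phi G a) := by
  have : (phi H).comp (FMap f)
      = (MonoidHom.toAdditive (Abelianization.map f)).comp (phi G) := by
    apply FreeAbelianGroup.lift_ext
    intro c
    obtain ⟨x, hx⟩ := ConjClasses.mk_surjective c.1
    simp only [AddMonoidHom.comp_apply]
    rw [show FMap f (FreeAbelianGroup.of c) = pushC f c.1 from FreeAbelianGroup.lift_apply_of _ _,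
      phi_of, ← hx, pushC_mk, phi_clsF, classAb_mk]
    show Additive.ofMul (Abelianization.of (f x))
      = Additive.ofMul (Abelianization.map f (Abelianization.of x))
    rw [Abelianization.map_of]
  calc phi H (FMap f a) = ((phi H).comp (FMap f)) a := rfl
    _ = _ := by rw [this]; rfl

lemma FMap_mem_ker (f : G →* H) {a : FreeAbelianGroup (NCC G)} (ha : a ∈ (phi G).ker) :
    FMap f a ∈ (phi H).ker := by
  rw [AddMonoidHom.mem_ker] at ha ⊢
  rw [phi_FMap, ha, map_zero]

lemma FMap_mem_NSub (f : G →* H) {a : FreeAbelianGroup (NCC G)} (ha : a ∈ NSub G) :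
    FMap f a ∈ NSub H := by
  induction ha using AddSubgroup.closure_induction with
  | mem x hx =>
    obtain ⟨y, rfl⟩ := hx
    rw [map_add, FMap_clsF, FMap_clsF]
    apply AddSubgroup.subset_closure
    exact ⟨f y, by rw [map_inv]⟩
  | zero => rw [map_zero]; exact (NSub H).zero_mem
  | add x y _ _ hx hy => rw [map_add]; exact (NSub H).add_mem hx hy
  | neg x _ hx => rw [map_neg]; exact (NSub H).neg_mem hx

noncomputable def kFMap (f : G →* H) : (phi G).ker →+ (phi H).ker :=
  AddMonoidHom.codRestrict ((FMap f).domRestrict ((phi G).ker)) _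
    (fun a => FMap_mem_ker f a.2)

/-- The functorial homomorphism `𝔹_f : 𝔹_G → 𝔹_H` induced by a group homomorphism. -/
noncomputable def SODmap (f : G →* H) : SOD G →+ SOD H :=
  QuotientAddGroup.map _ _ (kFMap f) (by
    intro x hx
    rw [AddSubgroup.mem_addSubgroupOf] at hx
    rw [AddSubgroup.mem_comap, AddSubgroup.mem_addSubgroupOf]
    exact FMap_mem_NSub f hx)

lemma SODmap_data (f : G →* H) (l : List G) (h : l.prod ∈ commutator G)
    (h' : (l.map f).prod ∈ commutator H) :
    SODmap f (data l h) = data (l.map f) h' := by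
  show QuotientAddGroup.map _ _ (kFMap f) _ (QuotientAddGroup.mk _) = _
  rw [QuotientAddGroup.map_mk]
  unfold data
  congr 1
  exact Subtype.ext (FMap_sumF f l)

lemma clsF_one : clsF G (1 : G) = 0 :=
  dif_pos (mk_eq_one_iff.mpr rfl)

lemma clsF_of_ne_one {g : G} (h : g ≠ 1) :
    clsF G g = FreeAbelianGroup.of ⟨ConjClasses.mk g, mt mk_eq_one_iff.mp h⟩ :=
  dif_neg _

lemma exists_clsF_eq_of (c : NCC G) : ∃ g : G, clsF G g = FreeAbelianGroup.of c := by
  obtain ⟨g, hg⟩ := ConjClasses.mk_surjective c.1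
  have hg1 : g ≠ 1 := fun h => c.2 (by rw [← hg, h, mk_eq_one_iff])
  exact ⟨g, (clsF_of_ne_one hg1).trans (congrArg _ (Subtype.ext hg))⟩

lemma closure_range_clsF : AddSubgroup.closure (Set.range (clsF G)) = ⊤ := by
  refine eq_top_iff.mpr ?_
  rintro x -
  induction x using FreeAbelianGroup.induction_on with
  | zero => exact zero_mem _
  | of c =>
    obtain ⟨g, hg⟩ := exists_clsF_eq_of (G := G) c
    exact AddSubgroup.subset_closure ⟨g, hg⟩
  | neg _ h => exact neg_mem h
  | add _ _ ha hb => exact add_mem ha hb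

lemma addMonoidHom_ext_clsF {M : Type*} [AddCommGroup M] {f f' : FreeAbelianGroup (NCC G) →+ M}
    (h : ∀ g : G, f (clsF G g) = f' (clsF G g)) : f = f' :=
  FreeAbelianGroup.lift_ext f f' fun c => by
    obtain ⟨g, hg⟩ := exists_clsF_eq_of (G := G) c
    rw [← hg, h g]

lemma NSub_le_ker_phi : NSub G ≤ (phi G).ker :=
  (AddSubgroup.closure_le _).mpr <| by
    rintro _ ⟨g, rfl⟩
    simp [AddMonoidHom.mem_ker, phi_clsF]

lemma two_nsmul_mem_NSub (hG : ∀ g : G, g ^ 2 = 1) (z : FreeAbelianGroup (NCC G)) :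
    2 • z ∈ NSub G := by
  have : AddSubgroup.closure (Set.range (clsF G)) ≤ (NSub G).comap (nsmulAddMonoidHom 2) := by
    refine (AddSubgroup.closure_le _).mpr ?_
    rintro _ ⟨g, rfl⟩
    refine AddSubgroup.subset_closure ⟨g, ?_⟩
    rw [nsmulAddMonoidHom_apply, two_nsmul,
      inv_eq_of_mul_eq_one_right ((pow_two g).symm.trans (hG g))]
  exact this (closure_range_clsF (G := G) ▸ AddSubgroup.mem_top z)

variable (G) in
noncomputable def SOD.mk : (phi G).ker →+ SOD G := QuotientAddGroup.mk' _

lemma SOD.mk_surjective : Function.Surjective (SOD.mk G) :=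
  QuotientAddGroup.mk'_surjective _

lemma SOD.mk_eq_zero_iff {x : (phi G).ker} :
    SOD.mk G x = 0 ↔ (x : FreeAbelianGroup (NCC G)) ∈ NSub G :=
  (QuotientAddGroup.eq_zero_iff _).trans AddSubgroup.mem_addSubgroupOf

@[simp]
lemma coe_kFMap (f : G →* H) (x : (phi G).ker) :
    (kFMap f x : FreeAbelianGroup (NCC H)) = FMap f x :=
  rfl

lemma SODmap_mk (f : G →* H) (x : (phi G).ker) :
    SODmap f (SOD.mk G x) = SOD.mk H (kFMap f x) :=
  QuotientAddGroup.map_mk _ _ _ _ x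

lemma two_nsmul_SOD_eq_zero (hG : ∀ g : G, g ^ 2 = 1) (α : SOD G) : 2 • α = 0 := by
  obtain ⟨x, rfl⟩ := SOD.mk_surjective α
  rw [← map_nsmul, SOD.mk_eq_zero_iff, AddSubgroup.coe_nsmul]
  exact two_nsmul_mem_NSub hG x

section CommGroup

variable {G : Type*} [CommGroup G]

noncomputable def liftCls {M : Type*} [AddCommGroup M] (f : G → M) :
    FreeAbelianGroup (NCC G) →+ M :=
  FreeAbelianGroup.lift fun c : NCC G => f (ConjClasses.mkEquiv.symm c.1)

lemma liftCls_clsF {M : Type*} [AddCommGroup M] {f : G → M} (hf : f 1 = 0) (g : G) :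
    liftCls f (clsF G g) = f g := by
  rcases eq_or_ne g 1 with rfl | hg
  · rw [clsF_one, map_zero, hf]
  · rw [clsF_of_ne_one hg]
    exact (FreeAbelianGroup.lift_apply_of _ _).trans
      (congrArg f (ConjClasses.mkEquiv.symm_apply_apply g))

open Classical in
noncomputable def restrictCls (H : Subgroup G) :
    FreeAbelianGroup (NCC G) →+ FreeAbelianGroup (NCC H) :=
  liftCls fun g => if h : g ∈ H then clsF H ⟨g, h⟩ else 0

open Classical in
lemma restrictCls_clsF (H : Subgroup G) (g : G) :
    restrictCls H (clsF G g) = if h : g ∈ H then clsF H ⟨g, h⟩ else 0 := by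
  rw [restrictCls, liftCls_clsF]
  exact (dif_pos H.one_mem).trans (clsF_one (G := H))

lemma restrictCls_clsF_of_mem {H : Subgroup G} {g : G} (h : g ∈ H) :
    restrictCls H (clsF G g) = clsF H ⟨g, h⟩ :=
  (restrictCls_clsF H g).trans (dif_pos h)

lemma restrictCls_clsF_of_notMem {H : Subgroup G} {g : G} (h : g ∉ H) :
    restrictCls H (clsF G g) = 0 :=
  (restrictCls_clsF H g).trans (dif_neg h)

lemma restrictCls_FMap_subtype (H : Subgroup G) (z : FreeAbelianGroup (NCC H)) :
    restrictCls H (FMap H.subtype z) = z := by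
  suffices (restrictCls H).comp (FMap H.subtype) = AddMonoidHom.id _ from
    DFunLike.congr_fun this z
  refine addMonoidHom_ext_clsF fun h => ?_
  simp only [AddMonoidHom.comp_apply, FMap_clsF, Subgroup.coe_subtype,
    restrictCls_clsF_of_mem h.2, AddMonoidHom.id_apply]

lemma NSub_le_comap_restrictCls (H : Subgroup G) :
    NSub G ≤ (NSub H).comap (restrictCls H) := by
  refine (AddSubgroup.closure_le _).mpr ?_
  rintro _ ⟨g, rfl⟩
  by_cases hg : g ∈ H
  · rw [SetLike.mem_coe, AddSubgroup.mem_comap, map_add, restrictCls_clsF_of_mem hg,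
      restrictCls_clsF_of_mem (H.inv_mem hg)]
    exact AddSubgroup.subset_closure ⟨⟨g, hg⟩, rfl⟩
  · rw [SetLike.mem_coe, AddSubgroup.mem_comap, map_add, restrictCls_clsF_of_notMem hg,
      restrictCls_clsF_of_notMem (mt H.inv_mem_iff.mp hg), add_zero]
    exact zero_mem _

lemma SODmap_subtype_injective (H : Subgroup G) : Function.Injective (SODmap H.subtype) := by
  refine (injective_iff_map_eq_zero _).mpr fun α hα => ?_
  obtain ⟨x, rfl⟩ := SOD.mk_surjective α
  rw [SODmap_mk, SOD.mk_eq_zero_iff] at hα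
  rw [SOD.mk_eq_zero_iff, ← restrictCls_FMap_subtype H x]
  exact NSub_le_comap_restrictCls H hα

lemma abelianizationMap_subtype_injective (H : Subgroup G) :
    Function.Injective (Abelianization.map H.subtype) := by
  intro a b hab
  obtain ⟨x, rfl⟩ := Abelianization.equivOfComm.surjective a
  obtain ⟨y, rfl⟩ := Abelianization.equivOfComm.surjective b
  simp only [Abelianization.equivOfComm, MulEquiv.coe_mk, Equiv.coe_fn_mk,
    Abelianization.map_of] at hab ⊢
  rw [Subtype.ext (Abelianization.equivOfComm.injective hab)]

lemma mem_ker_phi_of_FMap_subtype {H : Subgroup G} {z : FreeAbelianGroup (NCC H)}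
    (hz : FMap H.subtype z ∈ (phi G).ker) : z ∈ (phi H).ker := by
  rw [AddMonoidHom.mem_ker, phi_FMap] at hz
  exact abelianizationMap_subtype_injective H
    (hz.trans (map_one (Abelianization.map H.subtype)).symm)

lemma SOD.mk_mem_range_SODmap_subtype {H : Subgroup G} {x : (phi G).ker}
    (hx : (x : FreeAbelianGroup (NCC G)) - FMap H.subtype (restrictCls H x) ∈ NSub G) :
    SOD.mk G x ∈ (SODmap H.subtype).range := by
  have hz : restrictCls H x ∈ (phi H).ker := by
    refine mem_ker_phi_of_FMap_subtype ?_
    simpa using sub_mem x.2 (NSub_le_ker_phi hx)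
  refine ⟨SOD.mk H ⟨_, hz⟩, ?_⟩
  rw [SODmap_mk, ← sub_eq_zero, ← map_sub, SOD.mk_eq_zero_iff]
  simpa using neg_mem hx

end CommGroup

instance {X : Type*} : IsAddTorsionFree (FreeAbelianGroup X) :=
  (FreeAbelianGroup.equivFinsupp X).injective.isAddTorsionFree
    (FreeAbelianGroup.equivFinsupp X).toAddMonoidHom

section FreePart

variable {G : Type*} [CommGroup G] [LinearOrder G]

noncomputable def freePart : FreeAbelianGroup (NCC G) →+ FreeAbelianGroup (NCC G) :=
  liftCls fun g => if g < g⁻¹ then clsF G g else if g⁻¹ < g then -clsF G g⁻¹ else 0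

lemma freePart_clsF (g : G) :
    freePart (clsF G g) =
      if g < g⁻¹ then clsF G g else if g⁻¹ < g then -clsF G g⁻¹ else 0 := by
  rw [freePart, liftCls_clsF]
  simp

lemma freePart_clsF_of_lt {g : G} (h : g < g⁻¹) : freePart (clsF G g) = clsF G g := by
  rw [freePart_clsF, if_pos h]

lemma freePart_clsF_of_inv_lt {g : G} (h : g⁻¹ < g) : freePart (clsF G g) = -clsF G g⁻¹ := by
  rw [freePart_clsF, if_neg h.not_gt, if_pos h]

lemma freePart_clsF_of_inv_eq {g : G} (h : g⁻¹ = g) : freePart (clsF G g) = 0 := by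
  rw [freePart_clsF, h, if_neg (lt_irrefl g), if_neg (lt_irrefl g)]

lemma NSub_le_ker_freePart : NSub G ≤ (freePart (G := G)).ker := by
  refine (AddSubgroup.closure_le _).mpr ?_
  rintro _ ⟨g, rfl⟩
  rw [SetLike.mem_coe, AddMonoidHom.mem_ker, map_add]
  rcases lt_trichotomy g g⁻¹ with h | h | h
  · rw [freePart_clsF_of_lt h, freePart_clsF_of_inv_lt (by rwa [inv_inv]), inv_inv,
      add_neg_cancel]
  · rw [freePart_clsF_of_inv_eq h.symm, freePart_clsF_of_inv_eq (by rw [inv_inv]; exact h),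
      add_zero]
  · rw [freePart_clsF_of_inv_lt h, freePart_clsF_of_lt (by rwa [inv_inv]), neg_add_cancel]

lemma freePart_eq_zero_of_nsmul_mem {k : ℕ} (hk : k ≠ 0) {x : FreeAbelianGroup (NCC G)}
    (hx : k • x ∈ NSub G) : freePart x = 0 := by
  have := NSub_le_ker_freePart hx
  rwa [AddMonoidHom.mem_ker, map_nsmul, smul_eq_zero_iff_right hk] at this

lemma sub_freePart_sub_FMap_restrictCls_mem {H : Subgroup G} (hH : ∀ g : G, g ∈ H ↔ g ^ 2 = 1)
    (x : FreeAbelianGroup (NCC G)) :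
    x - freePart x - FMap H.subtype (restrictCls H x) ∈ NSub G := by
  let D := AddMonoidHom.id _ - freePart - (FMap H.subtype).comp (restrictCls H)
  have hH' : ∀ g : G, g ∈ H ↔ g⁻¹ = g :=
    fun g => (hH g).trans (pow_two g ▸ mul_eq_one_iff_inv_eq)
  suffices AddSubgroup.closure (Set.range (clsF G)) ≤ (NSub G).comap D from
    this (closure_range_clsF (G := G) ▸ AddSubgroup.mem_top x)
  refine (AddSubgroup.closure_le _).mpr ?_
  rintro _ ⟨g, rfl⟩
  simp only [SetLike.mem_coe, AddSubgroup.mem_comap, D, AddMonoidHom.sub_apply,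
    AddMonoidHom.id_apply, AddMonoidHom.comp_apply]
  rcases lt_trichotomy g g⁻¹ with h | h | h
  · rw [freePart_clsF_of_lt h, restrictCls_clsF_of_notMem (mt (hH' g).mp h.ne'), map_zero,
      sub_self, sub_zero]
    exact zero_mem _
  · rw [freePart_clsF_of_inv_eq h.symm, restrictCls_clsF_of_mem ((hH' g).mpr h.symm),
      FMap_clsF, Subgroup.coe_subtype, sub_zero, sub_self]
    exact zero_mem _
  · rw [freePart_clsF_of_inv_lt h, restrictCls_clsF_of_notMem (mt (hH' g).mp h.ne), map_zero,
      sub_zero, sub_neg_eq_add]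
    exact AddSubgroup.subset_closure ⟨g, rfl⟩

lemma mem_range_SODmap_subtype_of_nsmul_eq_zero {H : Subgroup G}
    (hH : ∀ g : G, g ∈ H ↔ g ^ 2 = 1) {β : SOD G} {k : ℕ} (hk : k ≠ 0)
    (hβ : k • β = 0) :
    β ∈ (SODmap H.subtype).range := by
  obtain ⟨x, rfl⟩ := SOD.mk_surjective β
  rw [← map_nsmul, SOD.mk_eq_zero_iff, AddSubgroup.coe_nsmul] at hβ
  have hx := sub_freePart_sub_FMap_restrictCls_mem hH (x : FreeAbelianGroup (NCC G))
  rw [freePart_eq_zero_of_nsmul_mem hk hβ, sub_zero] at hx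
  exact SOD.mk_mem_range_SODmap_subtype hx

end FreePart

theorem stmt11_general (G : Type*) [CommGroup G]
    (H₂ : Subgroup G) (hH₂ : ∀ g : G, g ∈ H₂ ↔ g ^ 2 = 1) :
    Function.Injective (SODmap H₂.subtype) ∧
    (∀ β : SOD G,
      (∃ α : SOD H₂, SODmap H₂.subtype α = β) ↔ (∃ k : ℕ, k ≠ 0 ∧ k • β = 0)) ∧
    (∀ β : SOD G, (∃ k : ℕ, k ≠ 0 ∧ k • β = 0) → 2 • β = 0) := by
  obtain ⟨_, -⟩ := exists_wellFoundedLT G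
  have torsion_mem_range {β : SOD G} : (∃ k : ℕ, k ≠ 0 ∧ k • β = 0) →
      β ∈ (SODmap H₂.subtype).range :=
    fun ⟨k, hk, hkβ⟩ => mem_range_SODmap_subtype_of_nsmul_eq_zero hH₂ hk hkβ
  have range_two_torsion {β : SOD G} : β ∈ (SODmap H₂.subtype).range → 2 • β = 0 := by
    rintro ⟨α, rfl⟩
    rw [← map_nsmul, two_nsmul_SOD_eq_zero (fun h => Subtype.ext ((hH₂ h).mp h.2)) α, map_zero]
  exact ⟨SODmap_subtype_injective H₂,
    fun β => ⟨fun hβ => ⟨2, two_ne_zero, range_two_torsion hβ⟩, torsion_mem_range⟩,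
    fun β hβ => range_two_torsion (torsion_mem_range hβ)⟩

/-- for a finite abelian group `G` with maximal elementary abelian
2-subgroup `H₂ = {x | x² = 1}`, the induction map `𝔹_{H₂} → 𝔹_G` is injective with image
the torsion subgroup of `𝔹_G`, which is an elementary abelian 2-group. -/
theorem stmt11 (G : Type*) [CommGroup G] [Finite G]
    (H₂ : Subgroup G) (hH₂ : ∀ g : G, g ∈ H₂ ↔ g ^ 2 = 1) :
    Function.Injective (SODmap H₂.subtype) ∧
    (∀ β : SOD G,
      (∃ α : SOD H₂, SODmap H₂.subtype α = β) ↔ (∃ k : ℕ, k ≠ 0 ∧ k • β = 0)) ∧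
    (∀ β : SOD G, (∃ k : ℕ, k ≠ 0 ∧ k • β = 0) → 2 • β = 0) :=
  stmt11_general G H₂ hH₂

end SingOrbit
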